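/- Let f be bounded, nondecreasing and satisfy (H1). There exist C > 0 and ε₀ > 0 such that for every ε ∈ (0, ε₀) and every maximizer ζ^ε of E_ε over A, one has E_ε(ζ^ε) ≥ (κ²/(4π))·log(1/ε) − C. -/

import Mathlib

open MeasureTheory Real Filter
open scoped ENNReal Topology

noncomputable section

abbrev Pt : Type := EuclideanSpace ℝ (Fin 2)

/-- The point (a, b) in the plane. -/
def pt (a b : ℝ) : Pt := WithLp.toLp 2 ![a, b]

/-- The open right half plane Π. -/
def halfPlane : Set Pt := {x | 0 < x 0}

/-- Reflection across the x₂-axis: x ↦ x̄. -/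
def reflect (x : Pt) : Pt := pt (-(x 0)) (x 1)

/-- Reflection across the x₁-axis. -/
def flip2 (x : Pt) : Pt := pt (x 0) (-(x 1))

/-- Green's function of -Δ in the half plane with zero Dirichlet data. -/
def G (x y : Pt) : ℝ := (1 / (2 * π)) * Real.log (dist (reflect x) y / dist x y)

/-- Green's operator. -/
def Gop (ζ : Pt → ℝ) (x : Pt) : ℝ := ∫ y in halfPlane, G x y * ζ y

/-- The rectangle D. -/
def Dset (r : ℝ) : Set Pt := {x | r/2 < x 0 ∧ x 0 < 2*r ∧ -1 < x 1 ∧ x 1 < 1}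

/-- The admissible class A. -/
structure InA (r κ : ℝ) (ζ : Pt → ℝ) : Prop where
  measurable : Measurable ζ
  essBdd : ∃ M : ℝ, ∀ᵐ x ∂(volume : Measure Pt), |ζ x| ≤ M
  nonneg : ∀ᵐ x ∂(volume : Measure Pt), 0 ≤ ζ x
  mass_le : (∫ x in halfPlane, ζ x) ≤ κ
  support_ae : ∀ᵐ x ∂(volume : Measure Pt), x ∉ Dset r → ζ x = 0

/-- F(s) = ∫₀ˢ f(t) dt. -/
def Fint (f : ℝ → ℝ) (s : ℝ) : ℝ := ∫ t in (0:ℝ)..s, f t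

/-- The convex conjugate J of F, with values in [0, +∞] (note J ≥ 0 since F(0) = 0). -/
def Jconj (f : ℝ → ℝ) (s : ℝ) : ℝ≥0∞ := ⨆ t : ℝ, ENNReal.ofReal (s * t - Fint f t)

/-- The energy functional E_ε, with values in [-∞, +∞). -/
def energy (f : ℝ → ℝ) (r W ε : ℝ) (ζ : Pt → ℝ) : EReal :=
  (((1/2) * (∫ x in Dset r, ζ x * Gop ζ x) - W * ∫ x in Dset r, (x 0) * ζ x : ℝ) : EReal)
  - ((ENNReal.ofReal (ε⁻¹ ^ 2) * ∫⁻ x in Dset r, Jconj f (ε^2 * ζ x) : ℝ≥0∞) : EReal)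

/-- Steiner symmetry with respect to the line x₂ = 0. -/
def SteinerSym (ζ : Pt → ℝ) : Prop :=
  (∀ᵐ x ∂(volume : Measure Pt), ζ (flip2 x) = ζ x) ∧
  (∀ᵐ x₁ ∂(volume : Measure ℝ), ∃ g : ℝ → ℝ,
      (∀ᵐ x₂ ∂(volume : Measure ℝ), ζ (pt x₁ x₂) = g x₂) ∧
      ∀ s t : ℝ, |s| ≤ |t| → g t ≤ g s)

/-- Hypothesis (H1). -/
def H1 (f : ℝ → ℝ) : Prop := (∀ s ≤ 0, f s = 0) ∧ ∀ s, 0 < s → 0 < f s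

/-- ζ is a maximizer of E_ε over A. -/
def IsMaximizer (f : ℝ → ℝ) (r W κ ε : ℝ) (ζ : Pt → ℝ) : Prop :=
  InA r κ ζ ∧ ∀ ζ', InA r κ ζ' → energy f r W ε ζ' ≤ energy f r W ε ζ

/-- μ is a Lagrange multiplier for ζ. -/
def IsLM (f : ℝ → ℝ) (r W ε : ℝ) (ζ : Pt → ℝ) (μ : ℝ) : Prop :=
  0 ≤ μ ∧ ∀ᵐ x ∂(volume : Measure Pt), x ∈ Dset r →
    ζ x = ε⁻¹^2 * f (Gop ζ x - W * x 0 - μ)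

/-- The essential support of ζ. -/
def essSupport (ζ : Pt → ℝ) : Set Pt :=
  {x | ∀ U ∈ nhds x, volume {y ∈ U | ζ y ≠ 0} ≠ 0}

/-- The odd extension of ζ across the x₂-axis. -/
def oddExt (ζ : Pt → ℝ) (x : Pt) : ℝ :=
  if 0 < x 0 then ζ x else if x 0 < 0 then -(ζ (reflect x)) else 0

/-- The truncated nonlinearity f_ρ. -/
def ftr (f : ℝ → ℝ) (ρ : ℝ) (s : ℝ) : ℝ := min (f s) (f ρ)

/-- A (Steiner-symmetric) maximizer of the truncated energy E_{ε,ρ} over A, together with a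
Lagrange multiplier μ, solving the truncated equation on the half plane with total mass κ. -/
def IsTruncMax (f : ℝ → ℝ) (r W κ ε ρ : ℝ) (ζ : Pt → ℝ) (μ : ℝ) : Prop :=
  InA r κ ζ ∧ SteinerSym ζ ∧
  (∀ ζ', InA r κ ζ' → energy (ftr f ρ) r W ε ζ' ≤ energy (ftr f ρ) r W ε ζ) ∧
  0 ≤ μ ∧
  (∀ᵐ x ∂(volume : Measure Pt), x ∈ halfPlane →
     ζ x = ε⁻¹^2 * ftr f ρ (Gop ζ x - W * x 0 - μ)) ∧
  (∫ x in halfPlane, ζ x) = κ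


/-!
Test the maximality of `ζε` against the uniform patch `(f 1 / ε²) · 1_Q`, where `Q` is the square
of side `l = ε √(κ / f 1)` with lower-left corner `(r, 0)`; its mass is exactly `κ`. For `x, y ∈ Q`
we have `|x̄ - y| ≥ 2r` and `|x - y| ≤ 2l`, so `G ≥ (1/2π) log (r / l)` on `Q × Q` and the
interaction term is at least `κ²/(4π) log (1/ε) - O(1)`. The linear term is at most `2rWκ`, and
since `ε² ζ` only takes the values `0` and `f 1`, where `J (f 1) ≤ f 1`, the penalty is at most `κ`.
Integrability of `G x` over `Q` comes from the majorant `(1/2π) (log 5r + |log |x₁ - y₁||)`, which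
depends on one coordinate of `y` only.
-/

open Set

def ptEquivProd : Pt ≃ᵐ ℝ × ℝ :=
  (MeasurableEquiv.toLp 2 (Fin 2 → ℝ)).symm.trans MeasurableEquiv.finTwoArrow

lemma ptEquivProd_apply (x : Pt) : ptEquivProd x = (x 0, x 1) := rfl

lemma measurePreserving_ptEquivProd : MeasurePreserving ptEquivProd volume volume :=
  (EuclideanSpace.volume_preserving_symm_measurableEquiv_toLp (Fin 2)).trans
    (volume_preserving_finTwoArrow ℝ)

lemma ae_apply_zero_ne (t : ℝ) : ∀ᵐ y : Pt, y 0 ≠ t := by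
  have h : {y : Pt | y 0 = t} = ptEquivProd ⁻¹' ({t} ×ˢ univ) := by
    ext y; simp [ptEquivProd_apply]
  rw [ae_iff]
  simp only [ne_eq, not_not]
  rw [h, measurePreserving_ptEquivProd.measure_preimage
    ((measurableSet_singleton _).prod MeasurableSet.univ).nullMeasurableSet,
    Measure.volume_eq_prod, Measure.prod_prod]
  simp

section Rectangle

def rect (a b c d : ℝ) : Set Pt := {x | a < x 0 ∧ x 0 < b ∧ c < x 1 ∧ x 1 < d}

variable {a b c d : ℝ}

lemma rect_eq_preimage (a b c d : ℝ) :
    rect a b c d = ptEquivProd ⁻¹' (Ioo a b ×ˢ Ioo c d) := by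
  ext x
  simp [rect, ptEquivProd_apply, and_assoc]

lemma measurableSet_rect (a b c d : ℝ) : MeasurableSet (rect a b c d) := by
  rw [rect_eq_preimage]
  exact ptEquivProd.measurable (measurableSet_Ioo.prod measurableSet_Ioo)

lemma volume_rect (a b c d : ℝ) :
    volume (rect a b c d) = ENNReal.ofReal (b - a) * ENNReal.ofReal (d - c) := by
  rw [rect_eq_preimage, measurePreserving_ptEquivProd.measure_preimage
      (measurableSet_Ioo.prod measurableSet_Ioo).nullMeasurableSet,
    Measure.volume_eq_prod, Measure.prod_prod, Real.volume_Ioo, Real.volume_Ioo]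

lemma volume_rect_ne_top (a b c d : ℝ) : volume (rect a b c d) ≠ ∞ := by
  rw [volume_rect]
  exact ENNReal.mul_ne_top ENNReal.ofReal_ne_top ENNReal.ofReal_ne_top

lemma measureReal_rect (hab : a ≤ b) (hcd : c ≤ d) :
    volume.real (rect a b c d) = (b - a) * (d - c) := by
  rw [measureReal_def, volume_rect, ENNReal.toReal_mul, ENNReal.toReal_ofReal (sub_nonneg.2 hab),
    ENNReal.toReal_ofReal (sub_nonneg.2 hcd)]

lemma integrableOn_rect_comp_apply_zero {h : ℝ → ℝ} (hh : IntegrableOn h (Ioo a b))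
    (c d : ℝ) : IntegrableOn (fun y : Pt => h (y 0)) (rect a b c d) := by
  rw [rect_eq_preimage]
  refine (measurePreserving_ptEquivProd.integrableOn_comp_preimage
    ptEquivProd.measurableEmbedding (f := fun p : ℝ × ℝ => h p.1)).2 ?_
  rw [IntegrableOn, Measure.volume_eq_prod, ← Measure.prod_restrict]
  exact hh.comp_fst _

lemma setIntegral_rect_comp_apply_zero (h : ℝ → ℝ) (a b : ℝ) (hcd : c ≤ d) :
    ∫ y in rect a b c d, h (y 0) = (d - c) * ∫ t in Ioo a b, h t := by
  change ∫ y in rect a b c d, h (ptEquivProd y).1 = _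
  rw [rect_eq_preimage, measurePreserving_ptEquivProd.setIntegral_preimage_emb
    ptEquivProd.measurableEmbedding (fun p : ℝ × ℝ => h p.1), Measure.volume_eq_prod,
    ← Measure.prod_restrict, integral_fun_fst]
  simp [measureReal_def, Real.volume_Ioo, hcd]

lemma measureReal_square {r l : ℝ} (hl : 0 ≤ l) : volume.real (rect r (r + l) 0 l) = l * l := by
  rw [measureReal_rect (by linarith) hl]
  ring

lemma Dset_eq_rect (r : ℝ) : Dset r = rect (r / 2) (2 * r) (-1) 1 := rfl

lemma square_subset_Dset {r l : ℝ} (hlr : l ≤ r) (hl1 : l ≤ 1) :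
    rect r (r + l) 0 l ⊆ Dset r :=
  fun _ ⟨_, _, _, _⟩ => ⟨by linarith, by linarith, by linarith, by linarith⟩

lemma Dset_subset_halfPlane {r : ℝ} (hr : 0 ≤ r) : Dset r ⊆ halfPlane :=
  fun _ hx => lt_of_le_of_lt (by linarith) hx.1

lemma volume_ne_top_of_subset_Dset {r : ℝ} {Q : Set Pt} (hQD : Q ⊆ Dset r) : volume Q ≠ ∞ :=
  measure_ne_top_of_subset hQD (by rw [Dset_eq_rect]; exact volume_rect_ne_top _ _ _ _)

end Rectangle

section LogIntegrals

def logAbsIntegral : ℝ := ∫ u in (-1:ℝ)..1, |log (|u|)|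

lemma intervalIntegrable_abs_log_abs_sub (t a b : ℝ) :
    IntervalIntegrable (fun u => |log (|t - u|)|) volume a b := by
  simpa only [sub_sub_cancel, Real.log_abs] using
    ((intervalIntegral.intervalIntegrable_log' (a := t - a) (b := t - b)).comp_sub_left t).abs

lemma integrableOn_const_add_abs_log_abs_sub (A t a b : ℝ) :
    IntegrableOn (fun u => A + |log (|t - u|)|) (Ioo a b) :=
  (integrableOn_const (by simp)).add
    ((intervalIntegrable_abs_log_abs_sub t a b).1.mono_set Ioo_subset_Ioc_self)

lemma setIntegral_abs_log_abs_sub_le {t c d : ℝ} (htc : c ≤ t) (htd : t ≤ d)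
    (hlen : d - c ≤ 1) : ∫ u in Ioo c d, |log (|t - u|)| ≤ logAbsIntegral := by
  rw [← integral_Ioc_eq_integral_Ioo, ← intervalIntegral.integral_of_le (htc.trans htd),
    intervalIntegral.integral_comp_sub_left (fun u => |log (|u|)|) t]
  refine intervalIntegral.integral_mono_interval (by linarith) (by linarith) (by linarith)
    (Eventually.of_forall fun u => abs_nonneg _) ?_
  simpa using intervalIntegrable_abs_log_abs_sub 0 (-1) 1

end LogIntegrals

section Green

lemma abs_apply_sub_le_dist (x y : Pt) (i : Fin 2) : |x i - y i| ≤ dist x y :=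
  (Real.dist_eq _ _).symm.trans_le (PiLp.dist_apply_le x y i)

lemma dist_le_of_abs_apply_sub_le {x y : Pt} {p q : ℝ} (h0 : |x 0 - y 0| ≤ p)
    (h1 : |x 1 - y 1| ≤ q) : dist x y ≤ p + q := by
  have hp := (abs_nonneg _).trans h0
  have hq := (abs_nonneg _).trans h1
  rw [EuclideanSpace.dist_eq, Fin.sum_univ_two, Real.dist_eq, Real.dist_eq, sq_abs, sq_abs,
    Real.sqrt_le_left (by positivity)]
  nlinarith [sq_abs (x 0 - y 0), sq_abs (x 1 - y 1), abs_nonneg (x 0 - y 0),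
    abs_nonneg (x 1 - y 1)]

lemma reflect_apply_zero (x : Pt) : reflect x 0 = -x 0 := rfl

lemma reflect_apply_one (x : Pt) : reflect x 1 = x 1 := rfl

@[fun_prop]
lemma continuous_reflect : Continuous reflect := by
  unfold reflect pt
  fun_prop

lemma measurable_uncurry_G : Measurable (Function.uncurry G) := by
  unfold G
  fun_prop

lemma measurable_setIntegral_G (s : Set Pt) : Measurable fun x => ∫ y in s, G x y :=
  (measurable_uncurry_G.stronglyMeasurable.integral_prod_right'
    (ν := volume.restrict s)).measurable

end Green

section Square

variable {r l : ℝ} {x y : Pt}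

lemma log_div_le_G (hr : 0 < r) (hx : x ∈ rect r (r + l) 0 l) (hy : y ∈ rect r (r + l) 0 l)
    (hxy : x ≠ y) : (1 / (2 * π)) * log (r / l) ≤ G x y := by
  obtain ⟨hx0, hx0', hx1, hx1'⟩ := hx
  obtain ⟨hy0, hy0', hy1, hy1'⟩ := hy
  have hl : 0 < l := by linarith
  have hd : 0 < dist x y := dist_pos.2 hxy
  have hd_le : dist x y ≤ l + l :=
    dist_le_of_abs_apply_sub_le (abs_sub_le_iff.2 ⟨by linarith, by linarith⟩)
      (abs_sub_le_iff.2 ⟨by linarith, by linarith⟩)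
  have hR : r + r ≤ dist (reflect x) y := by
    have := abs_apply_sub_le_dist (reflect x) y 0
    rw [reflect_apply_zero, abs_sub_comm, abs_of_pos (by linarith)] at this
    linarith
  refine mul_le_mul_of_nonneg_left (log_le_log (by positivity) ?_) (by positivity)
  rw [div_le_div_iff₀ hl hd]
  nlinarith

lemma G_nonneg_of_mem_square (hr : 0 < r) (hlr : l ≤ r) (hx : x ∈ rect r (r + l) 0 l)
    (hy : y ∈ rect r (r + l) 0 l) (hxy : x ≠ y) : 0 ≤ G x y := by
  have hl : 0 < l := by linarith [hx.1, hx.2.1]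
  refine le_trans ?_ (log_div_le_G hr hx hy hxy)
  exact mul_nonneg (by positivity) (log_nonneg ((one_le_div hl).2 hlr))

lemma G_le_of_mem_square (hlr : l ≤ r) (hx : x ∈ rect r (r + l) 0 l)
    (hy : y ∈ rect r (r + l) 0 l) (hxy : x 0 ≠ y 0) :
    G x y ≤ (1 / (2 * π)) * (log (5 * r) + |log (|x 0 - y 0|)|) := by
  obtain ⟨hx0, hx0', hx1, hx1'⟩ := hx
  obtain ⟨hy0, hy0', hy1, hy1'⟩ := hy
  have hd0 : 0 < |x 0 - y 0| := abs_pos.2 (sub_ne_zero.2 hxy)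
  have hd := abs_apply_sub_le_dist x y 0
  have hR_le : dist (reflect x) y ≤ 5 * r := by
    refine (dist_le_of_abs_apply_sub_le (p := 2 * (r + l)) (q := l) ?_ ?_).trans (by linarith)
    · rw [reflect_apply_zero, abs_le]; constructor <;> linarith
    · rw [reflect_apply_one, abs_le]; constructor <;> linarith
  have hR : 0 < dist (reflect x) y := by
    have := abs_apply_sub_le_dist (reflect x) y 0
    rw [reflect_apply_zero] at this
    exact lt_of_lt_of_le (abs_pos.2 (by linarith)) this
  rw [G, log_div hR.ne' (hd0.trans_le hd).ne']
  refine mul_le_mul_of_nonneg_left ?_ (by positivity)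
  linarith [log_le_log hR hR_le, log_le_log hd0 hd, neg_le_abs (log (|x 0 - y 0|))]

lemma integrableOn_G_square (hr : 0 < r) (hlr : l ≤ r) (hx : x ∈ rect r (r + l) 0 l) :
    IntegrableOn (G x) (rect r (r + l) 0 l) := by
  refine Integrable.mono' (integrableOn_rect_comp_apply_zero
      ((integrableOn_const_add_abs_log_abs_sub (log (5 * r)) (x 0) r (r + l)).const_mul
        (1 / (2 * π))) 0 l)
    (measurable_uncurry_G.comp measurable_prodMk_left).aestronglyMeasurable ?_
  filter_upwards [ae_restrict_mem (measurableSet_rect _ _ _ _),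
    ae_restrict_of_ae (ae_apply_zero_ne (x 0))] with y hy hyx
  rw [Real.norm_eq_abs,
    abs_of_nonneg (G_nonneg_of_mem_square hr hlr hx hy fun h => hyx (by rw [h]))]
  exact G_le_of_mem_square hlr hx hy (Ne.symm hyx)

lemma le_setIntegral_G_square (hr : 0 < r) (hlr : l ≤ r) (hx : x ∈ rect r (r + l) 0 l) :
    l * l * ((1 / (2 * π)) * log (r / l)) ≤ ∫ y in rect r (r + l) 0 l, G x y := by
  rw [← measureReal_square (by linarith [hx.1, hx.2.1]), ← smul_eq_mul, ← setIntegral_const]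
  refine setIntegral_mono_ae_restrict (integrableOn_const (volume_rect_ne_top _ _ _ _))
    (integrableOn_G_square hr hlr hx) ?_
  filter_upwards [ae_restrict_mem (measurableSet_rect _ _ _ _),
    ae_restrict_of_ae (ae_apply_zero_ne (x 0))] with y hy hyx
  exact log_div_le_G hr hx hy fun h => hyx (by rw [h])

lemma setIntegral_G_square_le (hr : 0 < r) (hlr : l ≤ r) (hl1 : l ≤ 1)
    (hx : x ∈ rect r (r + l) 0 l) :
    ∫ y in rect r (r + l) 0 l, G x y ≤
      l * ((1 / (2 * π)) * (l * log (5 * r) + logAbsIntegral)) := by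
  have hl : 0 < l := by linarith [hx.1, hx.2.1]
  calc ∫ y in rect r (r + l) 0 l, G x y
      ≤ ∫ y in rect r (r + l) 0 l, (1 / (2 * π)) * (log (5 * r) + |log (|x 0 - y 0|)|) := by
        refine setIntegral_mono_ae_restrict (integrableOn_G_square hr hlr hx)
          (integrableOn_rect_comp_apply_zero ((integrableOn_const_add_abs_log_abs_sub
            (log (5 * r)) (x 0) r (r + l)).const_mul (1 / (2 * π))) 0 l) ?_
        filter_upwards [ae_restrict_mem (measurableSet_rect _ _ _ _),
          ae_restrict_of_ae (ae_apply_zero_ne (x 0))] with y hy hyx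
        exact G_le_of_mem_square hlr hx hy (Ne.symm hyx)
    _ = l * ((1 / (2 * π)) * ∫ u in Ioo r (r + l), log (5 * r) + |log (|x 0 - u|)|) := by
        rw [setIntegral_rect_comp_apply_zero
          (fun u => (1 / (2 * π)) * (log (5 * r) + |log (|x 0 - u|)|)) _ _ hl.le, sub_zero,
          integral_const_mul]
    _ ≤ _ := by
        have hA : IntegrableOn (fun _ : ℝ => log (5 * r)) (Ioo r (r + l)) :=
          integrableOn_const measure_Ioo_lt_top.ne
        rw [integral_add hA ((intervalIntegrable_abs_log_abs_sub (x 0) r (r + l)).1.mono_set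
          Ioo_subset_Ioc_self), setIntegral_const, Real.volume_real_Ioo_of_le (by linarith),
          smul_eq_mul, add_sub_cancel_left]
        gcongr
        exact setIntegral_abs_log_abs_sub_le hx.1.le hx.2.1.le (by linarith)

lemma integrableOn_setIntegral_G_square (hr : 0 < r) (hlr : l ≤ r) (hl1 : l ≤ 1) :
    IntegrableOn (fun x => ∫ y in rect r (r + l) 0 l, G x y) (rect r (r + l) 0 l) := by
  refine Measure.integrableOn_of_bounded (volume_rect_ne_top _ _ _ _)
    (measurable_setIntegral_G _).aestronglyMeasurable
    (M := l * ((1 / (2 * π)) * (l * log (5 * r) + logAbsIntegral))) ?_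
  filter_upwards [ae_restrict_mem (measurableSet_rect _ _ _ _)] with x hx
  have hl : 0 < l := by linarith [hx.1, hx.2.1]
  have hnonneg : 0 ≤ l * l * ((1 / (2 * π)) * log (r / l)) :=
    mul_nonneg (by positivity) (mul_nonneg (by positivity) (log_nonneg ((one_le_div hl).2 hlr)))
  rw [Real.norm_eq_abs, abs_of_nonneg (hnonneg.trans (le_setIntegral_G_square hr hlr hx))]
  exact setIntegral_G_square_le hr hlr hl1 hx

lemma le_setIntegral_setIntegral_G_square (hr : 0 < r) (hl : 0 < l) (hlr : l ≤ r)
    (hl1 : l ≤ 1) :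
    (l * l) ^ 2 * ((1 / (2 * π)) * log (r / l)) ≤
      ∫ x in rect r (r + l) 0 l, ∫ y in rect r (r + l) 0 l, G x y :=
  calc (l * l) ^ 2 * ((1 / (2 * π)) * log (r / l))
      = ∫ _ in rect r (r + l) 0 l, l * l * ((1 / (2 * π)) * log (r / l)) := by
        rw [setIntegral_const, measureReal_square hl.le, smul_eq_mul]; ring
    _ ≤ _ := setIntegral_mono_on (integrableOn_const (volume_rect_ne_top _ _ _ _))
        (integrableOn_setIntegral_G_square hr hlr hl1) (measurableSet_rect _ _ _ _)
        fun _ hx => le_setIntegral_G_square hr hlr hx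

end Square

section Conjugate

variable {f : ℝ → ℝ}

lemma Fint_eq_zero_of_nonpos (hf1 : H1 f) {t : ℝ} (ht : t ≤ 0) : Fint f t = 0 := by
  rw [Fint, intervalIntegral.integral_symm, neg_eq_zero,
    intervalIntegral.integral_congr (g := fun _ => (0 : ℝ)) fun u hu => ?_]
  · simp
  · rw [uIcc_of_le ht] at hu
    exact hf1.1 u hu.2

lemma Fint_nonneg (hf : Monotone f) (hf1 : H1 f) (t : ℝ) : 0 ≤ Fint f t := by
  rcases le_total t 0 with ht | ht
  · rw [Fint_eq_zero_of_nonpos hf1 ht]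
  · exact intervalIntegral.integral_nonneg ht fun u hu =>
      (hf1.1 0 le_rfl).symm.le.trans (hf hu.1)

lemma mul_sub_le_Fint_sub_Fint (hf : Monotone f) (a t : ℝ) :
    f a * (t - a) ≤ Fint f t - Fint f a := by
  rw [Fint, Fint, intervalIntegral.integral_interval_sub_left hf.intervalIntegrable
    hf.intervalIntegrable]
  rcases le_total a t with hat | hta
  · calc f a * (t - a) = ∫ _ in a..t, f a := by simp [mul_comm]
      _ ≤ ∫ u in a..t, f u := intervalIntegral.integral_mono_on hat intervalIntegrable_const
          hf.intervalIntegrable fun u hu => hf hu.1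
  · have : ∫ u in t..a, f u ≤ ∫ _ in t..a, f a :=
      intervalIntegral.integral_mono_on hta hf.intervalIntegrable intervalIntegrable_const
        fun u hu => hf hu.2
    rw [intervalIntegral.integral_const, smul_eq_mul] at this
    rw [intervalIntegral.integral_symm]
    linarith

lemma Jconj_zero (hf : Monotone f) (hf1 : H1 f) : Jconj f 0 = 0 :=
  le_antisymm (iSup_le fun t => by simp [Fint_nonneg hf hf1 t]) bot_le

lemma Jconj_apply_le (hf : Monotone f) (hf1 : H1 f) (a : ℝ) :
    Jconj f (f a) ≤ ENNReal.ofReal (a * f a) :=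
  iSup_le fun t => ENNReal.ofReal_le_ofReal <| by
    nlinarith [mul_sub_le_Fint_sub_Fint hf a t, Fint_nonneg hf hf1 a]

end Conjugate

section Patch

variable {r c : ℝ} {Q : Set Pt}

lemma Gop_indicator_const (hQ : MeasurableSet Q) (hQH : Q ⊆ halfPlane) (c : ℝ) (x : Pt) :
    Gop (Q.indicator fun _ => c) x = c * ∫ y in Q, G x y := by
  have h : (fun y => G x y * Q.indicator (fun _ => c) y) = Q.indicator fun y => G x y * c :=
    funext fun y => (indicator_mul_right Q (G x) _).symm
  rw [Gop, h, setIntegral_indicator hQ, inter_eq_right.2 hQH, integral_mul_const, mul_comm]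

lemma InA_indicator_const (hr : 0 ≤ r) (hQ : MeasurableSet Q) (hQD : Q ⊆ Dset r) (hc : 0 ≤ c)
    {κ : ℝ} (hmass : volume.real Q * c ≤ κ) : InA r κ (Q.indicator fun _ => c) where
  measurable := measurable_const.indicator hQ
  essBdd := ⟨c, Eventually.of_forall fun x => by
    rw [abs_of_nonneg (indicator_nonneg (fun _ _ => hc) x)]
    exact indicator_le_self' (fun _ _ => hc) x⟩
  nonneg := Eventually.of_forall (indicator_nonneg fun _ _ => hc)
  mass_le := by
    rwa [setIntegral_indicator hQ, inter_eq_right.2 (hQD.trans (Dset_subset_halfPlane hr)),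
      setIntegral_const, smul_eq_mul]
  support_ae := Eventually.of_forall fun x hx => indicator_of_notMem (fun h => hx (hQD h)) _

lemma setIntegral_indicator_const_mul_Gop (hr : 0 ≤ r) (hQ : MeasurableSet Q)
    (hQD : Q ⊆ Dset r) :
    ∫ x in Dset r, Q.indicator (fun _ => c) x * Gop (Q.indicator fun _ => c) x =
      c * c * ∫ x in Q, ∫ y in Q, G x y := by
  have h : (fun x => Q.indicator (fun _ => c) x * (c * ∫ y in Q, G x y)) =
      Q.indicator fun x => c * (c * ∫ y in Q, G x y) :=
    funext fun x => (indicator_mul_left Q (fun _ => c) fun x => c * ∫ y in Q, G x y).symm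
  simp_rw [Gop_indicator_const hQ (hQD.trans (Dset_subset_halfPlane hr))]
  rw [h, setIntegral_indicator hQ, inter_eq_right.2 hQD, integral_const_mul, integral_const_mul,
    mul_assoc]

lemma setIntegral_apply_zero_mul_indicator_const_le (hr : 0 ≤ r) (hQ : MeasurableSet Q)
    (hQD : Q ⊆ Dset r) (hc : 0 ≤ c) :
    ∫ x in Dset r, x 0 * Q.indicator (fun _ => c) x ≤ 2 * r * (volume.real Q * c) := by
  have h : (fun x : Pt => x 0 * Q.indicator (fun _ => c) x) = Q.indicator fun x => x 0 * c :=
    funext fun x => (indicator_mul_right Q (· 0) _).symm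
  rw [h, setIntegral_indicator hQ, inter_eq_right.2 hQD]
  calc ∫ x in Q, x 0 * c ≤ ∫ _ in Q, 2 * r * c := by
        refine integral_mono_of_nonneg ?_ (integrableOn_const (volume_ne_top_of_subset_Dset hQD))
          ?_ <;> filter_upwards [ae_restrict_mem hQ] with x hx <;> have hxD := hQD hx
        · exact mul_nonneg (by linarith [hxD.1]) hc
        · exact mul_le_mul_of_nonneg_right hxD.2.1.le hc
    _ = 2 * r * (volume.real Q * c) := by rw [setIntegral_const, smul_eq_mul]; ring

lemma lintegral_Jconj_indicator_le {f : ℝ → ℝ} (hf : Monotone f) (hf1 : H1 f)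
    (hQ : MeasurableSet Q) (hQD : Q ⊆ Dset r) {ε : ℝ} (hε : ε ≠ 0) :
    ENNReal.ofReal (ε⁻¹ ^ 2) *
        ∫⁻ x in Dset r, Jconj f (ε ^ 2 * Q.indicator (fun _ => f 1 / ε ^ 2) x) ≤
      ENNReal.ofReal (volume.real Q * (f 1 / ε ^ 2)) := by
  have h : (fun x => Jconj f (ε ^ 2 * Q.indicator (fun _ => f 1 / ε ^ 2) x)) =
      Q.indicator fun _ => Jconj f (f 1) := by
    funext x
    by_cases hx : x ∈ Q
    · simp [hx, mul_div_cancel₀ _ (pow_ne_zero 2 hε)]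
    · simp [hx, Jconj_zero hf hf1]
  rw [h, lintegral_indicator hQ, Measure.restrict_restrict hQ, inter_eq_left.2 hQD,
    setLIntegral_const, ← ENNReal.ofReal_toReal (volume_ne_top_of_subset_Dset hQD)]
  calc ENNReal.ofReal (ε⁻¹ ^ 2) * (Jconj f (f 1) * ENNReal.ofReal (volume.real Q))
      ≤ ENNReal.ofReal (ε⁻¹ ^ 2) *
          (ENNReal.ofReal (1 * f 1) * ENNReal.ofReal (volume.real Q)) := by
        gcongr
        exact Jconj_apply_le hf hf1 1
    _ = ENNReal.ofReal (volume.real Q * (f 1 / ε ^ 2)) := by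
        rw [← ENNReal.ofReal_mul' measureReal_nonneg, ← ENNReal.ofReal_mul (by positivity)]
        congr 1
        ring

end Patch

lemma EReal.coe_le_coe_sub_coe_ennreal {a b c : ℝ} {p : ℝ≥0∞} (hc : 0 ≤ c)
    (hp : p ≤ ENNReal.ofReal c) (h : a ≤ b - c) : (a : EReal) ≤ (b : EReal) - (p : EReal) :=
  calc (a : EReal) ≤ ((b - c : ℝ) : EReal) := EReal.coe_le_coe_iff.2 h
    _ = (b : EReal) - ((ENNReal.ofReal c : ℝ≥0∞) : EReal) := by
        rw [EReal.coe_ennreal_ofReal, max_eq_left hc, EReal.coe_sub]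
    _ ≤ (b : EReal) - (p : EReal) :=
        EReal.sub_le_sub le_rfl (EReal.coe_ennreal_le_coe_ennreal_iff.2 hp)

lemma energy_indicator_square_ge {f : ℝ → ℝ} (hf : Monotone f) (hf1 : H1 f)
    {r l W ε κ : ℝ} (hr : 0 < r) (hl : 0 < l) (hlr : l ≤ r) (hl1 : l ≤ 1) (hW : 0 ≤ W) (hε : 0 < ε)
    (hmass : l * l * (f 1 / ε ^ 2) = κ) :
    ((κ ^ 2 / (4 * π) * log (r / l) - 2 * r * W * κ - κ : ℝ) : EReal) ≤
      energy f r W ε ((rect r (r + l) 0 l).indicator fun _ => f 1 / ε ^ 2) := by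
  have hQ := measurableSet_rect r (r + l) 0 l
  have hQD := square_subset_Dset hlr hl1
  have hc : 0 ≤ f 1 / ε ^ 2 := div_nonneg (hf1.2 1 one_pos).le (sq_nonneg ε)
  have hquad := le_setIntegral_setIntegral_G_square hr hl hlr hl1
  have hlin := setIntegral_apply_zero_mul_indicator_const_le hr.le hQ hQD hc
  have hpen := lintegral_Jconj_indicator_le hf hf1 hQ hQD hε.ne'
  rw [measureReal_square hl.le, hmass] at hlin hpen
  refine EReal.coe_le_coe_sub_coe_ennreal (hmass ▸ by positivity) hpen ?_
  rw [setIntegral_indicator_const_mul_Gop hr.le hQ hQD]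
  have hκ2 : κ ^ 2 / (4 * π) * log (r / l) =
      1 / 2 * (f 1 / ε ^ 2 * (f 1 / ε ^ 2) * ((l * l) ^ 2 * (1 / (2 * π) * log (r / l)))) := by
    rw [← hmass]; field_simp; ring
  nlinarith [mul_le_mul_of_nonneg_left hquad (mul_nonneg hc hc),
    mul_le_mul_of_nonneg_left hlin hW]

theorem statement_5_general
    (r κ W : ℝ) (hr : 0 < r) (hκ : 0 < κ) (hW : W = κ / (4 * π * r))
    (f : ℝ → ℝ) (hf : Monotone f) (hf1 : H1 f) :
    ∃ C > (0:ℝ), ∃ ε₀ > (0:ℝ), ∀ ε : ℝ, 0 < ε → ε < ε₀ →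
      ∀ ζε, IsMaximizer f r W κ ε ζε →
        ((κ ^ 2 / (4 * π) * Real.log (1 / ε) - C : ℝ) : EReal) ≤ energy f r W ε ζε := by
  have hf1pos : 0 < f 1 := hf1.2 1 one_pos
  set δ := √(κ / f 1)
  have hδ : 0 < δ := by positivity
  have hW0 : 0 ≤ W := by rw [hW]; positivity
  refine ⟨κ ^ 2 / (4 * π) * |log (r / δ)| + 2 * r * W * κ + κ + 1, by rw [hW]; positivity,
    min r 1 / δ, by positivity, fun ε hε hεlt ζε hmax => ?_⟩
  set l := δ * ε with hl_def
  have hl : 0 < l := by positivity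
  have hlr : l ≤ r := (lt_div_iff₀' hδ).1 hεlt |>.le.trans (min_le_left _ _)
  have hl1 : l ≤ 1 := (lt_div_iff₀' hδ).1 hεlt |>.le.trans (min_le_right _ _)
  have hmass : l * l * (f 1 / ε ^ 2) = κ := by
    have hδ2 : δ ^ 2 = κ / f 1 := Real.sq_sqrt (by positivity)
    rw [hl_def, show δ * ε * (δ * ε) = δ ^ 2 * ε ^ 2 by ring, hδ2]
    field_simp
  have hlog : log (r / l) = log (r / δ) + log (1 / ε) := by
    rw [hl_def, ← log_mul (by positivity) (by positivity)]
    congr 1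
    field_simp
  have hpatch := InA_indicator_const hr.le (measurableSet_rect _ _ _ _)
    (square_subset_Dset hlr hl1) (div_nonneg hf1pos.le (sq_nonneg ε))
    (by rw [measureReal_square hl.le, hmass])
  calc _ ≤ ((κ ^ 2 / (4 * π) * log (r / l) - 2 * r * W * κ - κ : ℝ) : EReal) := by
        rw [EReal.coe_le_coe_iff, hlog]
        nlinarith [neg_abs_le (log (r / δ)), (by positivity : 0 ≤ κ ^ 2 / (4 * π))]
    _ ≤ energy f r W ε ((rect r (r + l) 0 l).indicator fun _ => f 1 / ε ^ 2) :=
        energy_indicator_square_ge hf hf1 hr hl hlr hl1 hW0 hε hmass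
    _ ≤ energy f r W ε ζε := hmax.2 _ hpatch

theorem statement_5
    (r κ W : ℝ) (hr : 0 < r) (hκ : 0 < κ) (hW : W = κ / (4 * π * r))
    (f : ℝ → ℝ) (hf : Monotone f) (hfb : ∃ M, ∀ s, |f s| ≤ M) (hf1 : H1 f) :
    ∃ C > (0:ℝ), ∃ ε₀ > (0:ℝ), ∀ ε : ℝ, 0 < ε → ε < ε₀ →
      ∀ ζε, IsMaximizer f r W κ ε ζε →
        ((κ ^ 2 / (4 * π) * Real.log (1 / ε) - C : ℝ) : EReal) ≤ energy f r W ε ζε :=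
  statement_5_general r κ W hr hκ hW f hf hf1
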